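/- arXiv:1605.04352 — 2 statements merged into one kernel-verified Lean document; each statement's English description precedes it below -/
import Mathlib

section
/- Let 0 < x < 1, n ≥ 1, and let S_n = Z₁ + ... + Z_n be a sum of independent geometric random variables with P(Zᵢ ≥ k) = x^{ik}. Then for k ≥ 0, P(S_n = k) = x^k (1−xⁿ) ∏_{i=k+1}^{n+k−1} (1−xⁱ), and consequently P(S_n = k+1)/P(S_n = k) = x(1−x^{n+k})/(1−x^{k+1}). -/
/-!
Conditioning on the last summand gives `P(S_{n+1} = k) = ∑_{a + b = k} P(S_n = a) P(Z_{n+1} = b)`.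
Convolving a sequence `f` with the geometric weights `r^b (1 - r)` produces the unique `g` with
`g 0 = (1 - r) f 0` and `g (k + 1) = (1 - r) f (k + 1) + r g k`, so the closed form follows by
induction on `n` once it is checked to satisfy this recursion, which is a telescoping of the
products `∏ (1 - x^i)`. The ratio of consecutive values is read off the same telescoping.
-/

open MeasureTheory ProbabilityTheory Finset

section Algebra

variable {R : Type*} [CommRing R]

theorem sum_antidiagonal_mul_geometric {f g : ℕ → R} {r : R} (h0 : g 0 = (1 - r) * f 0)
    (hsucc : ∀ k, g (k + 1) = (1 - r) * f (k + 1) + r * g k) (k : ℕ) :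
    ∑ p ∈ antidiagonal k, f p.1 * (r ^ p.2 * (1 - r)) = g k := by
  induction k with
  | zero => simp [h0, mul_comm]
  | succ k ih =>
    rw [Nat.sum_antidiagonal_succ', hsucc, ← ih, mul_sum]
    congr 1
    · ring
    · exact sum_congr rfl fun p _ => by ring

def sumGeomPmf (x : R) (n k : ℕ) : R :=
  x ^ k * (1 - x ^ n) * ∏ i ∈ Icc (k + 1) (n + k - 1), (1 - x ^ i)

theorem prod_Icc_one_sub_pow_eq_mul (x : R) {a b : ℕ} (hab : a ≤ b) :
    ∏ i ∈ Icc a b, (1 - x ^ i) = (1 - x ^ a) * ∏ i ∈ Icc (a + 1) b, (1 - x ^ i) := by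
  rw [Icc_add_one_left_eq_Ioc, mul_prod_Ioc_eq_prod_Icc (f := fun i => 1 - x ^ i) hab]

theorem sumGeomPmf_one (x : R) (k : ℕ) : sumGeomPmf x 1 k = x ^ k * (1 - x) := by
  simp [sumGeomPmf]

theorem sumGeomPmf_succ_zero (x : R) {n : ℕ} (hn : 1 ≤ n) :
    sumGeomPmf x (n + 1) 0 = (1 - x ^ (n + 1)) * sumGeomPmf x n 0 := by
  obtain ⟨m, rfl⟩ := Nat.exists_eq_add_of_le' hn
  unfold sumGeomPmf
  rw [show m + 1 + 1 + 0 - 1 = m + 1 by omega, show m + 1 + 0 - 1 = m by omega,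
    prod_Icc_succ_top (by omega)]
  ring

theorem sumGeomPmf_succ_succ (x : R) {n : ℕ} (hn : 1 ≤ n) (k : ℕ) :
    sumGeomPmf x (n + 1) (k + 1)
      = (1 - x ^ (n + 1)) * sumGeomPmf x n (k + 1) + x ^ (n + 1) * sumGeomPmf x (n + 1) k := by
  obtain ⟨m, rfl⟩ := Nat.exists_eq_add_of_le' hn
  simp only [sumGeomPmf, show m + 1 + 1 + (k + 1) - 1 = m + k + 1 + 1 by omega,
    show m + 1 + (k + 1) - 1 = m + k + 1 by omega, show m + 1 + 1 + k - 1 = m + k + 1 by omega]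
  rw [prod_Icc_succ_top (by omega), prod_Icc_one_sub_pow_eq_mul x (a := k + 1) (by omega)]
  ring

theorem sum_antidiagonal_sumGeomPmf_mul (x : R) {n : ℕ} (hn : 1 ≤ n) (k : ℕ) :
    ∑ p ∈ antidiagonal k, sumGeomPmf x n p.1 * ((x ^ (n + 1)) ^ p.2 * (1 - x ^ (n + 1)))
      = sumGeomPmf x (n + 1) k :=
  sum_antidiagonal_mul_geometric (sumGeomPmf_succ_zero x hn) (sumGeomPmf_succ_succ x hn) k

theorem sumGeomPmf_succ_mul (x : R) {n : ℕ} (hn : 1 ≤ n) (k : ℕ) :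
    sumGeomPmf x n (k + 1) * (1 - x ^ (k + 1)) = x * (1 - x ^ (n + k)) * sumGeomPmf x n k := by
  obtain ⟨m, rfl⟩ := Nat.exists_eq_add_of_le' hn
  simp only [sumGeomPmf, show m + 1 + (k + 1) - 1 = m + k + 1 by omega,
    show m + 1 + k - 1 = m + k by omega]
  have hsplit := prod_Icc_one_sub_pow_eq_mul x (a := k + 1) (b := m + k + 1) (by omega)
  rw [prod_Icc_succ_top (by omega)] at hsplit
  linear_combination (x ^ (k + 1) * (1 - x ^ (m + 1))) * hsplit.symm

end Algebra

theorem sumGeomPmf_nonneg {x : ℝ} (hx0 : 0 ≤ x) (hx1 : x ≤ 1) (n k : ℕ) :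
    0 ≤ sumGeomPmf x n k :=
  have h : ∀ i : ℕ, 0 ≤ 1 - x ^ i := fun _ => sub_nonneg.2 (pow_le_one₀ hx0 hx1)
  mul_nonneg (mul_nonneg (pow_nonneg hx0 k) (h n)) (prod_nonneg fun i _ => h i)

theorem sumGeomPmf_pos {x : ℝ} (hx0 : 0 < x) (hx1 : x < 1) {n : ℕ} (hn : 1 ≤ n) (k : ℕ) :
    0 < sumGeomPmf x n k :=
  have h : ∀ i : ℕ, 1 ≤ i → 0 < 1 - x ^ i := fun i hi =>
    sub_pos.2 (pow_lt_one₀ hx0.le hx1 (Nat.one_le_iff_ne_zero.1 hi))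
  mul_pos (mul_pos (pow_pos hx0 k) (h n hn))
    (prod_pos fun i hi => h i (by rw [mem_Icc] at hi; omega))

section Probability

variable {Ω : Type*} [MeasurableSpace Ω] {μ : Measure Ω}

theorem measure_eq_of_geometric_tail {Y : Ω → ℕ} (hY : Measurable Y) {r : ℝ} (hr0 : 0 ≤ r)
    (htail : ∀ k, μ {ω | k ≤ Y ω} = ENNReal.ofReal (r ^ k)) (j : ℕ) :
    μ {ω | Y ω = j} = ENNReal.ofReal (r ^ j * (1 - r)) := by
  have hdiff : {ω | Y ω = j} = {ω | j ≤ Y ω} \ {ω | j + 1 ≤ Y ω} := by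
    ext ω; simp only [Set.mem_ofPred_eq, Set.mem_sdiff]; omega
  have hsub : {ω | j + 1 ≤ Y ω} ⊆ {ω | j ≤ Y ω} := fun _ => Nat.le_of_succ_le
  rw [hdiff, measure_sdiff hsub (hY measurableSet_Ici).nullMeasurableSet
      (by rw [htail]; exact ENNReal.ofReal_ne_top),
    htail, htail, ← ENNReal.ofReal_sub _ (by positivity)]
  congr 1
  ring

theorem ProbabilityTheory.IndepFun.measure_add_eq_sum_antidiagonal {X Y : Ω → ℕ}
    (hX : Measurable X) (hY : Measurable Y) (hXY : IndepFun X Y μ) (k : ℕ) :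
    μ {ω | X ω + Y ω = k} = ∑ p ∈ antidiagonal k, μ {ω | X ω = p.1} * μ {ω | Y ω = p.2} := by
  have hunion : {ω | X ω + Y ω = k} = ⋃ p ∈ antidiagonal k, X ⁻¹' {p.1} ∩ Y ⁻¹' {p.2} := by
    ext ω; simp
  rw [hunion, measure_biUnion_finset]
  · exact sum_congr rfl fun _ _ => indepFun_iff_measure_inter_preimage_eq_mul.1 hXY _ _
      (measurableSet_singleton _) (measurableSet_singleton _)
  · rintro p - q - hpq
    exact Set.disjoint_left.2 fun ω ⟨h1, h2⟩ ⟨h1', h2'⟩ =>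
      hpq (Prod.ext (h1.symm.trans h1') (h2.symm.trans h2'))
  · exact fun _ _ => (hX (measurableSet_singleton _)).inter (hY (measurableSet_singleton _))

theorem measure_sum_Icc_eq_sumGeomPmf {x : ℝ} (hx0 : 0 ≤ x) (hx1 : x ≤ 1) {Z : ℕ → Ω → ℕ}
    (hmeas : ∀ i, Measurable (Z i)) (hindep : iIndepFun Z μ)
    (hgeom : ∀ i, 1 ≤ i → ∀ k : ℕ, μ {ω | k ≤ Z i ω} = ENNReal.ofReal (x ^ (i * k)))
    {n : ℕ} (hn : 1 ≤ n) (k : ℕ) :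
    μ {ω | ∑ i ∈ Icc 1 n, Z i ω = k} = ENNReal.ofReal (sumGeomPmf x n k) := by
  have hZ : ∀ i, 1 ≤ i → ∀ j, μ {ω | Z i ω = j} = ENNReal.ofReal ((x ^ i) ^ j * (1 - x ^ i)) :=
    fun i hi => measure_eq_of_geometric_tail (hmeas i) (pow_nonneg hx0 i)
      fun k => by rw [hgeom i hi, pow_mul]
  induction n, hn using Nat.le_induction generalizing k with
  | base => simp [hZ 1 le_rfl, sumGeomPmf_one]
  | succ n hn ih =>
    have hind : IndepFun (fun ω => ∑ i ∈ Icc 1 n, Z i ω) (Z (n + 1)) μ := by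
      simpa only [sum_fn] using hindep.indepFun_finsetSum_of_notMem hmeas (by simp)
    simp_rw [sum_Icc_succ_top (show 1 ≤ n + 1 by omega)]
    rw [hind.measure_add_eq_sum_antidiagonal (Finset.measurable_sum _ fun i _ => hmeas i) (hmeas _)]
    simp_rw [ih, hZ (n + 1) (by omega)]
    have hweight : ∀ j, 0 ≤ (x ^ (n + 1)) ^ j * (1 - x ^ (n + 1)) := fun _ =>
      mul_nonneg (pow_nonneg (pow_nonneg hx0 _) _) (sub_nonneg.2 (pow_le_one₀ hx0 hx1))
    rw [← sum_antidiagonal_sumGeomPmf_mul x hn, ENNReal.ofReal_sum_of_nonneg fun _ _ =>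
      mul_nonneg (sumGeomPmf_nonneg hx0 hx1 _ _) (hweight _)]
    exact sum_congr rfl fun _ _ => (ENNReal.ofReal_mul (sumGeomPmf_nonneg hx0 hx1 _ _)).symm

end Probability

theorem Sn_pmf_and_ratio_general {Ω : Type*} [MeasurableSpace Ω] (P : Measure Ω)
    (x : ℝ) (hx0 : 0 < x) (hx1 : x < 1)
    (Z : ℕ → Ω → ℕ) (hmeas : ∀ i, Measurable (Z i))
    (hindep : iIndepFun Z P)
    (hgeom : ∀ i, 1 ≤ i → ∀ k : ℕ, P {ω | k ≤ Z i ω} = ENNReal.ofReal (x ^ (i * k)))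
    (n : ℕ) (hn : 1 ≤ n) (k : ℕ) :
    P {ω | ∑ i ∈ Finset.Icc 1 n, Z i ω = k}
        = ENNReal.ofReal (x ^ k * (1 - x ^ n)
            * ∏ i ∈ Finset.Icc (k + 1) (n + k - 1), (1 - x ^ i))
    ∧ (P {ω | ∑ i ∈ Finset.Icc 1 n, Z i ω = k + 1}).toReal
        / (P {ω | ∑ i ∈ Finset.Icc 1 n, Z i ω = k}).toReal
      = x * (1 - x ^ (n + k)) / (1 - x ^ (k + 1)) := by
  have hpmf := measure_sum_Icc_eq_sumGeomPmf hx0.le hx1.le hmeas hindep hgeom hn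
  refine ⟨hpmf k, ?_⟩
  have hpos := sumGeomPmf_pos hx0 hx1 hn
  rw [hpmf, hpmf, ENNReal.toReal_ofReal (hpos _).le, ENNReal.toReal_ofReal (hpos _).le,
    div_eq_div_iff (hpos k).ne' (sub_pos.2 (pow_lt_one₀ hx0.le hx1 k.succ_ne_zero)).ne']
  exact sumGeomPmf_succ_mul x hn k

theorem Sn_pmf_and_ratio {Ω : Type*} [MeasurableSpace Ω] (P : Measure Ω)
    [IsProbabilityMeasure P] (x : ℝ) (hx0 : 0 < x) (hx1 : x < 1)
    (Z : ℕ → Ω → ℕ) (hmeas : ∀ i, Measurable (Z i))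
    (hindep : iIndepFun Z P)
    (hgeom : ∀ i, 1 ≤ i → ∀ k : ℕ, P {ω | k ≤ Z i ω} = ENNReal.ofReal (x ^ (i * k)))
    (n : ℕ) (hn : 1 ≤ n) (k : ℕ) :
    P {ω | ∑ i ∈ Finset.Icc 1 n, Z i ω = k}
        = ENNReal.ofReal (x ^ k * (1 - x ^ n)
            * ∏ i ∈ Finset.Icc (k + 1) (n + k - 1), (1 - x ^ i))
    ∧ (P {ω | ∑ i ∈ Finset.Icc 1 n, Z i ω = k + 1}).toReal
        / (P {ω | ∑ i ∈ Finset.Icc 1 n, Z i ω = k}).toReal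
      = x * (1 - x ^ (n + k)) / (1 - x ^ (k + 1)) :=
  Sn_pmf_and_ratio_general P x hx0 hx1 Z hmeas hindep hgeom n hn k
end

section
/- Let 0 < x ≤ 1/2, t ≥ 0, n ≥ 1. With Xⁿ_t the countdown Markov chain value and X_t its n → ∞ limit, d_TV(X_t, Xⁿ_t) = (∏_{i=t+1}^{n+t} (1−xⁱ)) · (1 − ∏_{i=n+t+1}^∞ (1−xⁱ)) = P(Xⁿ_t = 0) − P(X_t = 0). -/
/-!
Write `S_k = Z_{k+1} + ⋯ + Z_n`; the countdown is at most `k` exactly when `S_k ≤ t + k`.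
Since `Z_{k+1}` is geometric of ratio `x^{k+1}` and independent of `S_{k+1}`, conditioning on
`S_{k+1}` expresses the laws of `S_k` and of `Xⁿ_t` through Gaussian binomial coefficients;
in particular `P(Xⁿ_t = 0) = ∏_{i=t+1}^{n+t} (1 - xⁱ)`. For `k ≥ 1` the ratio
`P(Xⁿ_t = k) / P(X_t = k)` is a product of factors `1 - xⁱ` including `1 - x^{n-k+1}`, divided by
`∏_{i>n} (1 - xⁱ) ≥ 1 - 2x^{n+1}`, so it is at most `1` when `x ≤ 1/2`. Hence the law of `Xⁿ_t`
exceeds that of `X_t` only at `0`, and the total variation distance is the excess there.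
-/

open MeasureTheory ProbabilityTheory

/-- The countdown process driven by delays `Z 1, ..., Z n`, started at height `n`
at time `-n`. -/
noncomputable def countdown {Ω : Type*} (Z : ℕ → Ω → ℕ) (n : ℕ) (t : ℤ) (ω : Ω) : ℕ :=
  sInf {k : ℕ | ((∑ i ∈ Finset.Icc (k + 1) n, Z i ω : ℕ) : ℤ) ≤ t + k}

open Finset

noncomputable def qPoch (x : ℝ) (m : ℕ) : ℝ := ∏ i ∈ Icc 1 m, (1 - x ^ i)

/-- The Gaussian binomial coefficient `[m + r - 1, m]_x` for `r ≥ 1` (see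
`qPoch_mul_qPoch_mul_qMultichoose`), defined by the recursion satisfied by the law of a sum of
independent geometric variables. -/
noncomputable def qMultichoose (x : ℝ) : ℕ → ℕ → ℝ
  | 0, m => if m = 0 then 1 else 0
  | r + 1, m => ∑ j ∈ range (m + 1), x ^ j * qMultichoose x r j

section QAnalogues

variable {x : ℝ}

lemma one_sub_pow_nonneg (hx0 : 0 ≤ x) (hx1 : x ≤ 1) (i : ℕ) : 0 ≤ 1 - x ^ i :=
  sub_nonneg.2 (pow_le_one₀ hx0 hx1)

lemma qPoch_succ (m : ℕ) : qPoch x (m + 1) = qPoch x m * (1 - x ^ (m + 1)) :=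
  prod_Icc_succ_top (by omega) _

lemma qPoch_pos (hx0 : 0 ≤ x) (hx1 : x < 1) (m : ℕ) : 0 < qPoch x m :=
  prod_pos fun i hi => sub_pos.2 (pow_lt_one₀ hx0 hx1 (by grind))

lemma qPoch_mul_prod_Icc {a b : ℕ} (h : a ≤ b) :
    qPoch x a * ∏ i ∈ Icc (a + 1) b, (1 - x ^ i) = qPoch x b := by
  have hIcc (m : ℕ) : Icc 1 m = Ioc 0 m := Icc_add_one_left_eq_Ioc 0 m
  rw [qPoch, qPoch, hIcc, hIcc, Icc_add_one_left_eq_Ioc]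
  exact prod_Ioc_consecutive _ (Nat.zero_le a) h

lemma qMultichoose_zero_right (r : ℕ) : qMultichoose x r 0 = 1 := by
  induction r with
  | zero => rfl
  | succ r ih => simp [qMultichoose, ih]

lemma qMultichoose_one (m : ℕ) : qMultichoose x 1 m = 1 := by
  simp [qMultichoose]

lemma qMultichoose_succ_succ (r m : ℕ) :
    qMultichoose x (r + 1) (m + 1)
      = qMultichoose x (r + 1) m + x ^ (m + 1) * qMultichoose x r (m + 1) :=
  sum_range_succ _ _

lemma qPoch_mul_qPoch_mul_qMultichoose (r m : ℕ) :
    qPoch x r * qPoch x m * qMultichoose x (r + 1) m = qPoch x (r + m) := by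
  induction r generalizing m with
  | zero => simp [qPoch, qMultichoose_one]
  | succ r ihr =>
    induction m with
    | zero => simp [qPoch, qMultichoose_zero_right]
    | succ m ihm =>
      have hr := ihr (m + 1)
      rw [qPoch_succ] at ihm hr
      rw [show r + 1 + m = r + m + 1 by ring] at ihm
      rw [show r + (m + 1) = r + m + 1 by ring] at hr
      rw [qPoch_succ r, qPoch_succ m, show r + 1 + (m + 1) = r + m + 1 + 1 by ring,
        qPoch_succ (r + m + 1), qMultichoose_succ_succ]
      linear_combination (1 - x ^ (m + 1)) * ihm + x ^ (m + 1) * (1 - x ^ (r + 1)) * hr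

lemma qPoch_mul_qMultichoose_eq_prod_Icc (hx0 : 0 ≤ x) (hx1 : x < 1) (r m : ℕ) :
    qPoch x r * qMultichoose x (r + 1) m = ∏ i ∈ Icc (m + 1) (r + m), (1 - x ^ i) := by
  refine mul_left_cancel₀ (qPoch_pos hx0 hx1 m).ne' ?_
  rw [qPoch_mul_prod_Icc (Nat.le_add_left m r), ← qPoch_mul_qPoch_mul_qMultichoose]
  ring

lemma qPoch_mul_qMultichoose_le (hx0 : 0 ≤ x) (hx1 : x < 1) (r : ℕ) {m : ℕ} (hm : 1 ≤ m) :
    qPoch x m * qMultichoose x (r + 1) m ≤ 1 - x ^ (r + 1) := by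
  calc qPoch x m * qMultichoose x (r + 1) m = ∏ i ∈ Icc (r + 1) (r + m), (1 - x ^ i) := by
        refine mul_left_cancel₀ (qPoch_pos hx0 hx1 r).ne' ?_
        rw [qPoch_mul_prod_Icc (Nat.le_add_right r m), ← qPoch_mul_qPoch_mul_qMultichoose]
        ring
    _ ≤ ∏ i ∈ {r + 1}, (1 - x ^ i) :=
        prod_le_prod_of_subset_of_le_one (by simp; omega)
          (fun i _ => one_sub_pow_nonneg hx0 hx1.le i) fun i _ _ => sub_le_self _ (pow_nonneg hx0 i)
    _ = 1 - x ^ (r + 1) := prod_singleton _ _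

lemma sum_pow_mul_qMultichoose_mul_pow (c r s : ℕ) :
    ∑ j ∈ range (s + 1), x ^ ((c + 1) * j) * qMultichoose x r j * x ^ (c * (s - j))
      = x ^ (c * s) * qMultichoose x (r + 1) s := by
  rw [qMultichoose, mul_sum]
  refine sum_congr rfl fun j hj => ?_
  obtain ⟨d, rfl⟩ := Nat.exists_eq_add_of_le (Nat.lt_succ_iff.1 (mem_range.1 hj))
  rw [Nat.add_sub_cancel_left]
  ring

end QAnalogues

section TailProducts

variable {x : ℝ}

lemma one_sub_sum_le_prod_one_sub {ι : Type*} (s : Finset ι) {f : ι → ℝ}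
    (h0 : ∀ i ∈ s, 0 ≤ f i) (h1 : ∀ i ∈ s, f i ≤ 1) :
    1 - ∑ i ∈ s, f i ≤ ∏ i ∈ s, (1 - f i) := by
  classical
  induction s using Finset.induction_on with
  | empty => simp
  | insert a s ha ih =>
    rw [sum_insert ha, prod_insert ha]
    have hs0 : 0 ≤ ∑ i ∈ s, f i := sum_nonneg fun i hi => h0 i (mem_insert_of_mem hi)
    have ih := ih (fun i hi => h0 i (mem_insert_of_mem hi)) fun i hi => h1 i (mem_insert_of_mem hi)
    nlinarith [h0 a (mem_insert_self a s), h1 a (mem_insert_self a s)]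

lemma multipliable_one_sub_pow (hx0 : 0 ≤ x) (hx1 : x < 1) (c : ℕ) :
    Multipliable fun i : ℕ => 1 - x ^ (c + i) := by
  have hsum : Summable fun i : ℕ => -x ^ (c + i) := by
    simpa [pow_add] using ((summable_geometric_of_lt_one hx0 hx1).mul_left (x ^ c)).neg
  simpa [sub_eq_add_neg] using Real.multipliable_one_add_of_summable hsum

lemma tprod_one_sub_pow_eq_prod_mul_tprod (hx0 : 0 ≤ x) (hx1 : x < 1) {a b : ℕ} (h : a ≤ b) :
    ∏' i : ℕ, (1 - x ^ (a + 1 + i))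
      = (∏ i ∈ Icc (a + 1) b, (1 - x ^ i)) * ∏' i : ℕ, (1 - x ^ (b + 1 + i)) := by
  obtain ⟨d, rfl⟩ := Nat.exists_eq_add_of_le h
  have htail : Multipliable fun i : ℕ => 1 - x ^ (a + 1 + (i + d)) :=
    (multipliable_one_sub_pow hx0 hx1 (a + d + 1)).congr fun i => by ring_nf
  rw [← htail.prod_mul_tprod_nat_mul' (f := fun i => 1 - x ^ (a + 1 + i)),
    ← Ico_add_one_right_eq_Icc, prod_Ico_eq_prod_range, show a + d + 1 - (a + 1) = d by omega]
  exact congrArg _ (tprod_congr fun i => by ring_nf)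

lemma tprod_one_sub_pow_div_qPoch (hx0 : 0 ≤ x) (hx1 : x < 1) {t b : ℕ} (h : t ≤ b) :
    (∏' i : ℕ, (1 - x ^ (1 + i))) / qPoch x t
      = (∏ i ∈ Icc (t + 1) b, (1 - x ^ i)) * ∏' i : ℕ, (1 - x ^ (b + 1 + i)) := by
  have hsplit := tprod_one_sub_pow_eq_prod_mul_tprod hx0 hx1 (Nat.zero_le b)
  rw [zero_add] at hsplit
  rw [hsplit, show ∏ i ∈ Icc 1 b, (1 - x ^ i) = qPoch x b from rfl, ← qPoch_mul_prod_Icc h,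
    mul_assoc, mul_div_cancel_left₀ _ (qPoch_pos hx0 hx1 t).ne']

lemma one_sub_pow_le_tprod (hx0 : 0 ≤ x) (hx2 : x ≤ 1 / 2) {j c : ℕ} (hjc : j < c) :
    1 - x ^ j ≤ ∏' i : ℕ, (1 - x ^ (c + i)) := by
  have hx1 : x < 1 := by linarith
  have hgeom : HasSum (fun i : ℕ => x ^ (c + i)) (x ^ c * (1 - x)⁻¹) := by
    simpa [pow_add] using (hasSum_geometric_of_lt_one hx0 hx1).mul_left (x ^ c)
  have hbound : x ^ c * (1 - x)⁻¹ ≤ x ^ j := by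
    rw [mul_inv_le_iff₀ (by linarith)]
    calc x ^ c ≤ x ^ (j + 1) := pow_le_pow_of_le_one hx0 hx1.le hjc
      _ = x ^ j * x := pow_succ x j
      _ ≤ x ^ j * (1 - x) := mul_le_mul_of_nonneg_left (by linarith) (pow_nonneg hx0 j)
  refine ge_of_tendsto' (multipliable_one_sub_pow hx0 hx1 c).hasProd fun s => ?_
  calc 1 - x ^ j ≤ 1 - ∑ i ∈ s, x ^ (c + i) := by
        linarith [sum_le_hasSum s (fun i _ => pow_nonneg hx0 (c + i)) hgeom]
    _ ≤ ∏ i ∈ s, (1 - x ^ (c + i)) :=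
        one_sub_sum_le_prod_one_sub s (fun i _ => pow_nonneg hx0 _)
          fun i _ => pow_le_one₀ hx0 hx1.le

end TailProducts
section Probability

variable {Ω : Type*} [MeasurableSpace Ω] {P : Measure Ω} [IsFiniteMeasure P]

lemma measureReal_eq_of_measureReal_le_eq_pow {U : Ω → ℕ} (hU : Measurable U) {q : ℝ}
    (h : ∀ k : ℕ, P.real {ω | k ≤ U ω} = q ^ k) (j : ℕ) :
    P.real {ω | U ω = j} = q ^ j * (1 - q) := by
  have hsplit : {ω | j ≤ U ω} = {ω | U ω = j} ∪ {ω | j + 1 ≤ U ω} := by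
    ext ω
    simp only [Set.mem_ofPred_eq, Set.mem_union]
    omega
  have hdisj : Disjoint {ω | U ω = j} {ω | j + 1 ≤ U ω} :=
    Set.disjoint_left.2 fun ω h1 h2 => by simp_all
  have hj := measureReal_union hdisj (hU measurableSet_Ici) (μ := P)
  rw [← hsplit, h, h, pow_succ] at hj
  linear_combination -hj

namespace ProbabilityTheory.IndepFun

lemma measureReal_mem_and_mem_eq_sum {U V : Ω → ℕ} (hVU : IndepFun V U P)
    (hU : Measurable U) (hV : Measurable V) (s : Finset ℕ) (A : ℕ → Set ℕ) :
    P.real {ω | V ω ∈ s ∧ U ω ∈ A (V ω)}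
      = ∑ j ∈ s, P.real {ω | V ω = j} * P.real {ω | U ω ∈ A j} := by
  have hset : {ω | V ω ∈ s ∧ U ω ∈ A (V ω)} = ⋃ j ∈ s, (V ⁻¹' {j} ∩ U ⁻¹' A j) := by
    ext ω
    simp
  rw [hset, measureReal_biUnion_finset
    ((Set.pairwiseDisjoint_fiber V _).mono fun j => Set.inter_subset_left)
    fun j _ => (hV (measurableSet_singleton j)).inter (hU MeasurableSet.of_discrete)]
  refine sum_congr rfl fun j _ => ?_
  simp only [Measure.real, hVU.measure_inter_preimage_eq_mul _ _ (measurableSet_singleton j)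
    MeasurableSet.of_discrete, ENNReal.toReal_mul]
  rfl

lemma measureReal_add_eq {U V : Ω → ℕ} (hVU : IndepFun V U P)
    (hU : Measurable U) (hV : Measurable V) (m : ℕ) :
    P.real {ω | U ω + V ω = m}
      = ∑ j ∈ range (m + 1), P.real {ω | V ω = j} * P.real {ω | U ω = m - j} := by
  have h := hVU.measureReal_mem_and_mem_eq_sum hU hV (range (m + 1)) fun j => {m - j}
  simp only [Set.mem_singleton_iff] at h
  rw [← h]
  congr 1
  ext ω
  simp only [Set.mem_ofPred_eq, mem_range]
  omega

lemma measureReal_le_and_le_add_eq {U V : Ω → ℕ} (hVU : IndepFun V U P)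
    (hU : Measurable U) (hV : Measurable V) (s : ℕ) :
    P.real {ω | V ω ≤ s ∧ s ≤ U ω + V ω}
      = ∑ j ∈ range (s + 1), P.real {ω | V ω = j} * P.real {ω | s - j ≤ U ω} := by
  have h := hVU.measureReal_mem_and_mem_eq_sum hU hV (range (s + 1)) fun j => Set.Ici (s - j)
  simp only [Set.mem_Ici] at h
  rw [← h]
  congr 1
  ext ω
  simp only [Set.mem_ofPred_eq, mem_range]
  omega

end ProbabilityTheory.IndepFun

lemma measureReal_le_eq_sum {V : Ω → ℕ} (hV : Measurable V) (s : ℕ) :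
    P.real {ω | V ω ≤ s} = ∑ j ∈ range (s + 1), P.real {ω | V ω = j} := by
  rw [show {ω | V ω ≤ s} = V ⁻¹' ↑(range (s + 1)) by ext; simp,
    ← sum_measureReal_preimage_singleton _ fun j _ => hV (measurableSet_singleton j)]
  rfl

end Probability

section Countdown

variable {Ω : Type*} (Z : ℕ → Ω → ℕ) (n t : ℕ)

lemma countdown_le_iff (ω : Ω) (k : ℕ) :
    countdown Z n t ω ≤ k ↔ ∑ i ∈ Icc (k + 1) n, Z i ω ≤ t + k := by
  have hmem : ∀ j, j ∈ {j : ℕ | ((∑ i ∈ Icc (j + 1) n, Z i ω : ℕ) : ℤ) ≤ t + j}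
      ↔ ∑ i ∈ Icc (j + 1) n, Z i ω ≤ t + j := fun j => by
    simp only [Set.mem_ofPred_eq]
    omega
  have hmono : ∀ j l, j ≤ l → ∑ i ∈ Icc (l + 1) n, Z i ω ≤ ∑ i ∈ Icc (j + 1) n, Z i ω :=
    fun j l hjl => sum_le_sum_of_subset (Icc_subset_Icc (by omega) le_rfl)
  have hn := (hmem n).2 (by simp)
  unfold countdown
  refine ⟨fun h => ?_, fun h => Nat.sInf_le ((hmem k).2 h)⟩
  have := (hmem _).1 (Nat.sInf_mem ⟨n, hn⟩)
  have := hmono _ _ h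
  omega

lemma countdown_le (ω : Ω) : countdown Z n t ω ≤ n :=
  (countdown_le_iff Z n t ω n).2 (by simp)

lemma countdown_eq_zero_iff (ω : Ω) :
    countdown Z n t ω = 0 ↔ ∑ i ∈ Icc 1 n, Z i ω ≤ t := by
  simpa using countdown_le_iff Z n t ω 0

lemma countdown_eq_succ_iff {k : ℕ} (hk : k < n) (ω : Ω) :
    countdown Z n t ω = k + 1 ↔ ∑ i ∈ Icc (k + 2) n, Z i ω ≤ t + (k + 1)
      ∧ t + (k + 1) ≤ Z (k + 1) ω + ∑ i ∈ Icc (k + 2) n, Z i ω := by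
  have hle := countdown_le_iff Z n t ω (k + 1)
  have hlt := countdown_le_iff Z n t ω k
  rw [← insert_Icc_add_one_left_eq_Icc hk, sum_insert (by simp)] at hlt
  rw [show k + 1 + 1 = k + 2 from rfl] at hle hlt
  omega

lemma measurable_countdown [MeasurableSpace Ω] (hmeas : ∀ i, Measurable (Z i)) :
    Measurable (countdown Z n t) := by
  refine measurable_of_Iic fun k => ?_
  have hset : countdown Z n t ⁻¹' Set.Iic k = {ω | ∑ i ∈ Icc (k + 1) n, Z i ω ≤ t + k} :=
    Set.ext fun ω => countdown_le_iff Z n t ω k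
  rw [hset]
  exact measurableSet_le (Finset.measurable_sum _ fun i _ => hmeas i) measurable_const

end Countdown

section GeometricFamily

variable {Ω : Type*} [MeasurableSpace Ω] {P : Measure Ω} {x : ℝ} {Z : ℕ → Ω → ℕ}

lemma indepFun_sum_Icc (hmeas : ∀ i, Measurable (Z i)) (hindep : iIndepFun Z P) (k n : ℕ) :
    IndepFun (fun ω => ∑ i ∈ Icc (k + 2) n, Z i ω) (Z (k + 1)) P := by
  have h := hindep.indepFun_finsetSum_of_notMem hmeas (s := Icc (k + 2) n) (i := k + 1) (by simp)
  rwa [show ∑ i ∈ Icc (k + 2) n, Z i = fun ω => ∑ i ∈ Icc (k + 2) n, Z i ω by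
    ext ω; exact sum_apply ω _ Z] at h

lemma measureReal_sum_Icc_eq [IsProbabilityMeasure P] (hmeas : ∀ i, Measurable (Z i))
    (hindep : iIndepFun Z P)
    (hgeom : ∀ i, 1 ≤ i → ∀ k : ℕ, P.real {ω | k ≤ Z i ω} = x ^ (i * k)) (k r m : ℕ) :
    P.real {ω | ∑ i ∈ Icc (k + 1) (k + r), Z i ω = m}
      = (∏ i ∈ Icc (k + 1) (k + r), (1 - x ^ i)) * x ^ ((k + 1) * m) * qMultichoose x r m := by
  induction r generalizing k m with
  | zero => rcases m with _ | m <;> simp [qMultichoose]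
  | succ r ih =>
    have hIcc : Icc (k + 1) (k + (r + 1)) = insert (k + 1) (Icc (k + 2) (k + 1 + r)) := by
      rw [show k + (r + 1) = k + 1 + r by ring]
      exact (insert_Icc_add_one_left_eq_Icc (by omega)).symm
    have hnotMem : k + 1 ∉ Icc (k + 2) (k + 1 + r) := by simp
    have hZ (j : ℕ) : P.real {ω | Z (k + 1) ω = j} = x ^ ((k + 1) * j) * (1 - x ^ (k + 1)) := by
      rw [measureReal_eq_of_measureReal_le_eq_pow (hmeas _)
        (fun j => by rw [hgeom _ (by omega), pow_mul]), ← pow_mul]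
    simp only [hIcc, sum_insert hnotMem, prod_insert hnotMem]
    rw [(indepFun_sum_Icc hmeas hindep k _).measureReal_add_eq (hmeas _)
      (Finset.measurable_sum _ fun i _ => hmeas i), mul_assoc _ (x ^ _),
      ← sum_pow_mul_qMultichoose_mul_pow, mul_sum]
    refine sum_congr rfl fun j _ => ?_
    have hsum := ih (k + 1) j
    rw [show k + 1 + 1 = k + 2 from rfl] at hsum
    rw [hsum, hZ]
    ring

lemma measureReal_countdown_eq_zero [IsProbabilityMeasure P] (hx0 : 0 ≤ x) (hx1 : x < 1)
    (hmeas : ∀ i, Measurable (Z i)) (hindep : iIndepFun Z P)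
    (hgeom : ∀ i, 1 ≤ i → ∀ k : ℕ, P.real {ω | k ≤ Z i ω} = x ^ (i * k)) (n t : ℕ) :
    P.real {ω | countdown Z n t ω = 0} = ∏ i ∈ Icc (t + 1) (n + t), (1 - x ^ i) := by
  have hsum := measureReal_sum_Icc_eq hmeas hindep hgeom 0 n
  simp only [zero_add, one_mul] at hsum
  simp only [countdown_eq_zero_iff]
  rw [measureReal_le_eq_sum (Finset.measurable_sum _ fun i _ => hmeas i), sum_congr rfl
    fun m _ => hsum m, ← qPoch_mul_qMultichoose_eq_prod_Icc hx0 hx1, qMultichoose, mul_sum]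
  exact sum_congr rfl fun m _ => by rw [qPoch]; ring

lemma measureReal_countdown_eq_succ [IsProbabilityMeasure P]
    (hmeas : ∀ i, Measurable (Z i)) (hindep : iIndepFun Z P)
    (hgeom : ∀ i, 1 ≤ i → ∀ k : ℕ, P.real {ω | k ≤ Z i ω} = x ^ (i * k)) {n k : ℕ} (hk : k < n)
    (t : ℕ) :
    P.real {ω | countdown Z n t ω = k + 1} = x ^ ((k + 1) * (t + (k + 1)))
      * (∏ i ∈ Icc (k + 2) n, (1 - x ^ i)) * qMultichoose x (n - k) (t + (k + 1)) := by
  obtain ⟨r, rfl⟩ : ∃ r, n = k + 1 + r := ⟨n - (k + 1), by omega⟩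
  have hsum := measureReal_sum_Icc_eq hmeas hindep hgeom (k + 1) r
  rw [show k + 1 + 1 = k + 2 from rfl] at hsum
  simp only [countdown_eq_succ_iff Z _ t hk]
  rw [(indepFun_sum_Icc hmeas hindep k _).measureReal_le_and_le_add_eq (hmeas _)
    (Finset.measurable_sum _ fun i _ => hmeas i), show k + 1 + r - k = r + 1 by omega,
    mul_right_comm, ← sum_pow_mul_qMultichoose_mul_pow, sum_mul]
  refine sum_congr rfl fun j _ => ?_
  rw [hsum, hgeom _ (by omega)]
  ring

lemma pow_mul_prod_mul_qMultichoose_le (hx0 : 0 ≤ x) (hx2 : x ≤ 1 / 2) {n k : ℕ} (hk : k < n)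
    (t : ℕ) :
    x ^ ((k + 1) * (t + (k + 1))) * (∏ i ∈ Icc (k + 2) n, (1 - x ^ i))
        * qMultichoose x (n - k) (t + (k + 1))
      ≤ x ^ ((k + 1) * (t + (k + 1))) * (∏' i : ℕ, (1 - x ^ (k + 1 + 1 + i)))
        / ∏ i ∈ Icc 1 (t + (k + 1)), (1 - x ^ i) := by
  have hx1 : x < 1 := by linarith
  obtain ⟨r, rfl⟩ : ∃ r, n = k + 1 + r := ⟨n - (k + 1), by omega⟩
  set c := x ^ ((k + 1) * (t + (k + 1))) * ∏ i ∈ Icc (k + 2) (k + 1 + r), (1 - x ^ i)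
  have hc : 0 ≤ c :=
    mul_nonneg (pow_nonneg hx0 _) (prod_nonneg fun i _ => one_sub_pow_nonneg hx0 hx1.le i)
  rw [tprod_one_sub_pow_eq_prod_mul_tprod hx0 hx1 (Nat.le_add_right (k + 1) r),
    show k + 1 + r - k = r + 1 by omega, show k + 1 + 1 = k + 2 from rfl, ← mul_assoc,
    le_div_iff₀ (show 0 < ∏ i ∈ Icc 1 (t + (k + 1)), (1 - x ^ i) from qPoch_pos hx0 hx1 _)]
  calc c * qMultichoose x (r + 1) (t + (k + 1)) * qPoch x (t + (k + 1))
      = c * (qPoch x (t + (k + 1)) * qMultichoose x (r + 1) (t + (k + 1))) := by ring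
    _ ≤ c * (1 - x ^ (r + 1)) :=
      mul_le_mul_of_nonneg_left (qPoch_mul_qMultichoose_le hx0 hx1 r (by omega)) hc
    _ ≤ c * ∏' i : ℕ, (1 - x ^ (k + 1 + r + 1 + i)) :=
      mul_le_mul_of_nonneg_left (one_sub_pow_le_tprod hx0 hx2 (by omega)) hc

lemma measureReal_countdown_eq_succ_le [IsProbabilityMeasure P] (hx0 : 0 ≤ x) (hx2 : x ≤ 1 / 2)
    (hmeas : ∀ i, Measurable (Z i)) (hindep : iIndepFun Z P)
    (hgeom : ∀ i, 1 ≤ i → ∀ k : ℕ, P.real {ω | k ≤ Z i ω} = x ^ (i * k)) (n t k : ℕ) :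
    P.real {ω | countdown Z n t ω = k + 1}
      ≤ x ^ ((k + 1) * (t + (k + 1))) * (∏' i : ℕ, (1 - x ^ (k + 1 + 1 + i)))
        / ∏ i ∈ Icc 1 (t + (k + 1)), (1 - x ^ i) := by
  have hx1 : x ≤ 1 := by linarith
  rcases lt_or_ge k n with hk | hk
  · rw [measureReal_countdown_eq_succ hmeas hindep hgeom hk]
    exact pow_mul_prod_mul_qMultichoose_le hx0 hx2 hk t
  · have hempty : {ω | countdown Z n t ω = k + 1} = ∅ :=
      Set.eq_empty_of_forall_notMem fun ω hω => by
        have := countdown_le Z n t ω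
        simp only [Set.mem_ofPred_eq] at hω
        omega
    rw [hempty, measureReal_empty]
    exact div_nonneg
      (mul_nonneg (pow_nonneg hx0 _) (tprod_nonneg fun i => one_sub_pow_nonneg hx0 hx1 _))
      (prod_nonneg fun i _ => one_sub_pow_nonneg hx0 hx1 i)

end GeometricFamily

section TotalVariation

variable {α : Type*} [MeasurableSpace α] [Countable α] [MeasurableSingletonClass α]
  {μ ν : Measure α}

lemma measure_le_measure_of_forall_singleton_le {S : Set α} (h : ∀ k ∈ S, ν {k} ≤ μ {k}) :
    ν S ≤ μ S := by
  have hfib (ρ : Measure α) : ∑' k : S, ρ {(k : α)} = ρ S := by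
    simpa using tsum_measure_preimage_singleton (μ := ρ) S.to_countable (f := id)
      fun k _ => measurableSet_singleton k
  rw [← hfib ν, ← hfib μ]
  exact ENNReal.tsum_le_tsum fun k => h k k.2

variable [IsProbabilityMeasure μ] [IsProbabilityMeasure ν] {a : α}

lemma measureReal_sub_le_of_forall_ne (h : ∀ k ≠ a, ν.real {k} ≤ μ.real {k}) (B : Set α) :
    ν.real B - μ.real B ≤ ν.real {a} - μ.real {a} := by
  have hoff (B : Set α) : ν.real (B \ {a}) ≤ μ.real (B \ {a}) :=
    ENNReal.toReal_mono (measure_ne_top _ _) <| measure_le_measure_of_forall_singleton_le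
      fun k hk => (ENNReal.toReal_le_toReal (measure_ne_top _ _) (measure_ne_top _ _)).1 (h k hk.2)
  have hon (B : Set α) : ν.real B - μ.real B ≤ ν.real (B ∩ {a}) - μ.real (B ∩ {a}) := by
    have hν := measureReal_inter_add_sdiff (μ := ν) (s := B) (measurableSet_singleton a)
    have hμ := measureReal_inter_add_sdiff (μ := μ) (s := B) (measurableSet_singleton a)
    linarith [hoff B]
  by_cases ha : a ∈ B
  · simpa [Set.inter_singleton_of_mem ha] using hon B
  · have hpos := hon Set.univ
    simp only [probReal_univ, sub_self, Set.univ_inter] at hpos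
    have := hon B
    simp only [Set.inter_singleton_eq_empty.2 ha, measureReal_empty, sub_self] at this
    linarith

theorem iSup_abs_measureReal_sub_eq_of_forall_ne (h : ∀ k ≠ a, ν.real {k} ≤ μ.real {k}) :
    ⨆ B : Set α, |μ.real B - ν.real B| = ν.real {a} - μ.real {a} := by
  have hbound (B : Set α) : |μ.real B - ν.real B| ≤ ν.real {a} - μ.real {a} := by
    have hB := measureReal_sub_le_of_forall_ne h B
    have hBc := measureReal_sub_le_of_forall_ne h Bᶜ
    rw [probReal_compl_eq_one_sub B.to_countable.measurableSet,
      probReal_compl_eq_one_sub B.to_countable.measurableSet] at hBc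
    exact abs_sub_le_iff.2 ⟨by linarith, by linarith⟩
  refine le_antisymm (ciSup_le hbound) (le_ciSup_of_le ⟨_, Set.forall_mem_range.2 hbound⟩ {a} ?_)
  rw [abs_sub_comm]
  exact le_abs_self _

end TotalVariation

theorem iSup_abs_measureReal_preimage_sub_eq_of_forall_ne {Ω α : Type*} [MeasurableSpace Ω]
    [MeasurableSpace α] [Countable α] [MeasurableSingletonClass α] {P : Measure Ω}
    [IsProbabilityMeasure P] {X Y : Ω → α} (hX : Measurable X) (hY : Measurable Y) {a : α}
    (h : ∀ k ≠ a, P.real {ω | Y ω = k} ≤ P.real {ω | X ω = k}) :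
    ⨆ B : Set α, |(P {ω | X ω ∈ B}).toReal - (P {ω | Y ω ∈ B}).toReal|
      = (P {ω | Y ω = a}).toReal - (P {ω | X ω = a}).toReal := by
  have := Measure.isProbabilityMeasure_map (μ := P) hX.aemeasurable
  have := Measure.isProbabilityMeasure_map (μ := P) hY.aemeasurable
  have hsup := iSup_abs_measureReal_sub_eq_of_forall_ne (μ := P.map X) (ν := P.map Y) (a := a)
    fun k hk => by
      rw [map_measureReal_apply hX (measurableSet_singleton _),
        map_measureReal_apply hY (measurableSet_singleton _)]
      exact h k hk
  simpa only [map_measureReal_apply hX (Set.to_countable _).measurableSet,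
    map_measureReal_apply hY (Set.to_countable _).measurableSet, measureReal_def, Set.preimage,
    Set.mem_singleton_iff] using hsup

theorem dTV_countdown_marginal_general {Ω : Type*} [MeasurableSpace Ω] (P : Measure Ω)
    [IsProbabilityMeasure P] (x : ℝ) (hx0 : 0 < x) (hx2 : x ≤ 1 / 2)
    (Z : ℕ → Ω → ℕ) (hmeas : ∀ i, Measurable (Z i))
    (hindep : iIndepFun Z P)
    (hgeom : ∀ i, 1 ≤ i → ∀ k : ℕ, P {ω | k ≤ Z i ω} = ENNReal.ofReal (x ^ (i * k)))
    (t n : ℕ)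
    (X : Ω → ℕ) (hXmeas : Measurable X)
    (hX : ∀ k : ℕ, P {ω | X ω = k}
      = ENNReal.ofReal (x ^ (k * (t + k)) * (∏' i : ℕ, (1 - x ^ (k + 1 + i)))
          / ∏ i ∈ Finset.Icc 1 (t + k), (1 - x ^ i))) :
    (⨆ B : Set ℕ, |(P {ω | X ω ∈ B}).toReal
        - (P {ω | countdown Z n t ω ∈ B}).toReal|)
      = (∏ i ∈ Finset.Icc (t + 1) (n + t), (1 - x ^ i))
          * (1 - ∏' i : ℕ, (1 - x ^ (n + t + 1 + i)))
    ∧ (⨆ B : Set ℕ, |(P {ω | X ω ∈ B}).toReal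
        - (P {ω | countdown Z n t ω ∈ B}).toReal|)
      = (P {ω | countdown Z n t ω = 0}).toReal - (P {ω | X ω = 0}).toReal := by
  have hx1 : x < 1 := by linarith
  have hgeom' (i : ℕ) (hi : 1 ≤ i) (k : ℕ) : P.real {ω | k ≤ Z i ω} = x ^ (i * k) := by
    rw [measureReal_def, hgeom i hi k, ENNReal.toReal_ofReal (by positivity)]
  have hsucc (k : ℕ) : P.real {ω | countdown Z n t ω = k + 1} ≤ P.real {ω | X ω = k + 1} := by
    refine (measureReal_countdown_eq_succ_le hx0.le hx2 hmeas hindep hgeom' n t k).trans ?_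
    rw [measureReal_def, hX, ENNReal.toReal_ofReal']
    exact le_max_left _ _
  have hX0 : P.real {ω | X ω = 0}
      = (∏ i ∈ Icc (t + 1) (n + t), (1 - x ^ i)) * ∏' i : ℕ, (1 - x ^ (n + t + 1 + i)) := by
    rw [measureReal_def, hX 0]
    simp only [zero_mul, pow_zero, one_mul, zero_add, add_zero]
    rw [show ∏ i ∈ Icc 1 t, (1 - x ^ i) = qPoch x t from rfl,
      tprod_one_sub_pow_div_qPoch hx0.le hx1 (Nat.le_add_left t n), ENNReal.toReal_ofReal]
    exact mul_nonneg (prod_nonneg fun i _ => one_sub_pow_nonneg hx0.le hx1.le i)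
      (tprod_nonneg fun i => one_sub_pow_nonneg hx0.le hx1.le _)
  have hsup := iSup_abs_measureReal_preimage_sub_eq_of_forall_ne hXmeas
    (measurable_countdown Z n t hmeas) (a := 0) fun
      | 0, h => absurd rfl h
      | k + 1, _ => hsucc k
  refine ⟨hsup.trans ?_, hsup⟩
  rw [← measureReal_def, ← measureReal_def, hX0,
    measureReal_countdown_eq_zero hx0.le hx1 hmeas hindep hgeom' n t]
  ring

theorem dTV_countdown_marginal {Ω : Type*} [MeasurableSpace Ω] (P : Measure Ω)
    [IsProbabilityMeasure P] (x : ℝ) (hx0 : 0 < x) (hx2 : x ≤ 1 / 2)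
    (Z : ℕ → Ω → ℕ) (hmeas : ∀ i, Measurable (Z i))
    (hindep : iIndepFun Z P)
    (hgeom : ∀ i, 1 ≤ i → ∀ k : ℕ, P {ω | k ≤ Z i ω} = ENNReal.ofReal (x ^ (i * k)))
    (t n : ℕ) (hn : 1 ≤ n)
    (X : Ω → ℕ) (hXmeas : Measurable X)
    (hX : ∀ k : ℕ, P {ω | X ω = k}
      = ENNReal.ofReal (x ^ (k * (t + k)) * (∏' i : ℕ, (1 - x ^ (k + 1 + i)))
          / ∏ i ∈ Finset.Icc 1 (t + k), (1 - x ^ i))) :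
    (⨆ B : Set ℕ, |(P {ω | X ω ∈ B}).toReal
        - (P {ω | countdown Z n t ω ∈ B}).toReal|)
      = (∏ i ∈ Finset.Icc (t + 1) (n + t), (1 - x ^ i))
          * (1 - ∏' i : ℕ, (1 - x ^ (n + t + 1 + i)))
    ∧ (⨆ B : Set ℕ, |(P {ω | X ω ∈ B}).toReal
        - (P {ω | countdown Z n t ω ∈ B}).toReal|)
      = (P {ω | countdown Z n t ω = 0}).toReal - (P {ω | X ω = 0}).toReal :=
  dTV_countdown_marginal_general P x hx0 hx2 Z hmeas hindep hgeom t n X hXmeas hX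
end
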